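/- arXiv:2203.12653 — 8 statements merged into one kernel-verified Lean document; each statement's English description precedes it below -/
import Mathlib

section
/- Let Y ⊆ ℝⁿ be nonempty, closed, and convex, F : ℝⁿ → ℝⁿ continuous, and 0 < a < b. For c > 0 let z*_c(y) denote the unique maximizer over z ∈ Y of ⟪F(y), y − z⟫ − (c/2)‖y − z‖². Then for every y, φ_{ab}(y) = φ_a(y) − φ_b(y) ≥ ((b − a)/2)‖y − z*_b(y)‖². -/
open RealInnerProductSpace

/-- Lower bound of the D-gap function: φ_a(y) - φ_b(y) ≥ ((b-a)/2)‖y - z*_b(y)‖². -/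
theorem dgap_lower_bound {n : ℕ} (Y : Set (EuclideanSpace ℝ (Fin n)))
    (hY : Y.Nonempty) (hYc : IsClosed Y) (hYconv : Convex ℝ Y)
    (F : EuclideanSpace ℝ (Fin n) → EuclideanSpace ℝ (Fin n)) (hF : Continuous F)
    (a b : ℝ) (ha : 0 < a) (hab : a < b)
    (φ : ℝ → EuclideanSpace ℝ (Fin n) → ℝ)
    (hφ : ∀ c y, φ c y = sSup {v : ℝ | ∃ z ∈ Y, v = ⟪F y, y - z⟫ - c / 2 * ‖y - z‖ ^ 2})
    (zb : EuclideanSpace ℝ (Fin n) → EuclideanSpace ℝ (Fin n))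
    (hzbY : ∀ y, zb y ∈ Y)
    (hzbMax : ∀ y, IsMaxOn (fun z => ⟪F y, y - z⟫ - b / 2 * ‖y - z‖ ^ 2) Y (zb y))
    (y : EuclideanSpace ℝ (Fin n)) :
    (b - a) / 2 * ‖y - zb y‖ ^ 2 ≤ φ a y - φ b y := by
  have hbdd : BddAbove {v : ℝ | ∃ z ∈ Y, v = ⟪F y, y - z⟫ - a / 2 * ‖y - z‖ ^ 2} := by
    refine ⟨‖F y‖ ^ 2 / (2 * a), ?_⟩
    rintro v ⟨z, hz, rfl⟩
    have h1 := real_inner_le_norm (F y) (y - z)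
    have h2 : 0 ≤ (a * ‖y - z‖ - ‖F y‖) ^ 2 := sq_nonneg _
    have h3 : 0 < 2 * a := by linarith
    rw [le_div_iff₀ h3]
    nlinarith [norm_nonneg (y - z), norm_nonneg (F y)]
  have h1 : ⟪F y, y - zb y⟫ - a / 2 * ‖y - zb y‖ ^ 2 ≤ φ a y := by
    rw [hφ]; exact le_csSup hbdd ⟨zb y, hzbY y, rfl⟩
  have h2 : φ b y = ⟪F y, y - zb y⟫ - b / 2 * ‖y - zb y‖ ^ 2 := by
    rw [hφ]
    apply IsGreatest.csSup_eq
    refine ⟨⟨zb y, hzbY y, rfl⟩, ?_⟩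
    rintro v ⟨z, hz, rfl⟩
    exact hzbMax y hz
  linarith
end

section
/- Let Y ⊆ ℝⁿ be nonempty closed convex, F continuous, 0 < a < b, and φ_{ab} the D-gap function. If y_s ∈ Y satisfies φ_{ab}(y_s) = 0, then y_s = z*_b(y_s), i.e., y_s is a fixed point of the map y ↦ z*_b(y), where z*_b(y) is the unique maximizer over z ∈ Y of ⟪F(y), y − z⟫ − (b/2)‖y − z‖². -/
open RealInnerProductSpace

/-- A root of the D-gap function is a fixed point of y ↦ z*_b(y). -/
theorem dgap_root_is_fixed_point {n : ℕ} (Y : Set (EuclideanSpace ℝ (Fin n)))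
    (hY : Y.Nonempty) (hYc : IsClosed Y) (hYconv : Convex ℝ Y)
    (F : EuclideanSpace ℝ (Fin n) → EuclideanSpace ℝ (Fin n)) (hF : Continuous F)
    (a b : ℝ) (ha : 0 < a) (hab : a < b)
    (φ : ℝ → EuclideanSpace ℝ (Fin n) → ℝ)
    (hφ : ∀ c y, φ c y = sSup {v : ℝ | ∃ z ∈ Y, v = ⟪F y, y - z⟫ - c / 2 * ‖y - z‖ ^ 2})
    (zb : EuclideanSpace ℝ (Fin n) → EuclideanSpace ℝ (Fin n))
    (hzbY : ∀ y, zb y ∈ Y)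
    (hzbMax : ∀ y, IsMaxOn (fun z => ⟪F y, y - z⟫ - b / 2 * ‖y - z‖ ^ 2) Y (zb y))
    (ys : EuclideanSpace ℝ (Fin n)) (hysY : ys ∈ Y)
    (hroot : φ a ys - φ b ys = 0) :
    ys = zb ys := by
  have hbdd : ∀ c : ℝ, 0 < c →
      BddAbove {v : ℝ | ∃ z ∈ Y, v = ⟪F ys, ys - z⟫ - c / 2 * ‖ys - z‖ ^ 2} := by
    intro c hc
    refine ⟨‖F ys‖ ^ 2 / (2 * c), ?_⟩
    rintro v ⟨z, hz, rfl⟩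
    have h1 : ⟪F ys, ys - z⟫ ≤ ‖F ys‖ * ‖ys - z‖ := real_inner_le_norm _ _
    have h2 : 0 < 2 * c := by linarith
    rw [le_div_iff₀ h2]
    nlinarith [sq_nonneg (c * ‖ys - z‖ - ‖F ys‖), norm_nonneg (ys - z)]
  have hmem : ∀ c : ℝ, (⟪F ys, ys - zb ys⟫ - c / 2 * ‖ys - zb ys‖ ^ 2) ∈
      {v : ℝ | ∃ z ∈ Y, v = ⟪F ys, ys - z⟫ - c / 2 * ‖ys - z‖ ^ 2} :=
    fun c => ⟨zb ys, hzbY ys, rfl⟩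
  have hφa : ⟪F ys, ys - zb ys⟫ - a / 2 * ‖ys - zb ys‖ ^ 2 ≤ φ a ys := by
    rw [hφ]; exact le_csSup (hbdd a ha) (hmem a)
  have hφb : φ b ys = ⟪F ys, ys - zb ys⟫ - b / 2 * ‖ys - zb ys‖ ^ 2 := by
    rw [hφ]
    apply le_antisymm
    · apply csSup_le ⟨_, hmem b⟩
      rintro v ⟨z, hz, rfl⟩
      exact hzbMax ys hz
    · exact le_csSup (hbdd b (ha.trans hab)) (hmem b)
  have hsq : ‖ys - zb ys‖ ^ 2 ≤ 0 := by
    by_contra h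
    push_neg at h
    have := mul_pos (by linarith : (0:ℝ) < (b - a) / 2) h
    linarith
  have hn : ‖ys - zb ys‖ = 0 := by
    have h2 := le_antisymm hsq (sq_nonneg _)
    exact pow_eq_zero_iff (by norm_num) |>.mp h2
  have := sub_eq_zero.mp (norm_eq_zero.mp hn)
  exact this
end

section
/- Under the assumptions of the previous statement (φ(y_k) − φ(y_{k+1}) ≥ C₁‖y_k − y_{k+1}‖², φ(y_{k+1}) ≤ C₂‖y_k − y_{k+1}‖², φ ≥ 0, C₁, C₂ > 0), the sequence (y_k) is Cauchy, hence converges to some limit y*, and for all k, ‖y_k − y*‖ ≤ √(φ(y₀)/C₁) · (1/(1 − r)) · r^k, where r = √(C₂/(C₁ + C₂)) < 1, i.e., (y_k) converges R-linearly. -/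
open Filter Topology

/-- R-linear convergence of the iterates under sufficient decrease and error bound. -/
theorem merit_R_linear_convergence {n : ℕ}
    (φ : EuclideanSpace ℝ (Fin n) → ℝ) (y : ℕ → EuclideanSpace ℝ (Fin n))
    (C₁ C₂ : ℝ) (hC₁ : 0 < C₁) (hC₂ : 0 < C₂)
    (hnonneg : ∀ k, 0 ≤ φ (y k))
    (hdecr : ∀ k, C₁ * ‖y k - y (k + 1)‖ ^ 2 ≤ φ (y k) - φ (y (k + 1)))
    (herr : ∀ k, φ (y (k + 1)) ≤ C₂ * ‖y k - y (k + 1)‖ ^ 2) :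
    Real.sqrt (C₂ / (C₁ + C₂)) < 1 ∧
      ∃ ystar : EuclideanSpace ℝ (Fin n), Tendsto y atTop (𝓝 ystar) ∧
        ∀ k, ‖y k - ystar‖ ≤ Real.sqrt (φ (y 0) / C₁) *
          (1 / (1 - Real.sqrt (C₂ / (C₁ + C₂)))) * Real.sqrt (C₂ / (C₁ + C₂)) ^ k := by
  set q : ℝ := C₂ / (C₁ + C₂) with hqdef
  set r : ℝ := Real.sqrt q with hrdef
  set C : ℝ := Real.sqrt (φ (y 0) / C₁) with hCdef
  have hsum : 0 < C₁ + C₂ := by linarith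
  have hq0 : 0 ≤ q := div_nonneg hC₂.le hsum.le
  have hq1 : q < 1 := (div_lt_one hsum).2 (by linarith)
  have hr1 : r < 1 := by
    have := Real.sqrt_lt_sqrt hq0 hq1
    simpa using this
  have hr0 : 0 ≤ r := Real.sqrt_nonneg _
  have hr2 : r ^ 2 = q := Real.sq_sqrt hq0
  have hC0 : 0 ≤ C := Real.sqrt_nonneg _
  have hC2 : C ^ 2 = φ (y 0) / C₁ := Real.sq_sqrt (div_nonneg (hnonneg 0) hC₁.le)
  -- geometric decay of φ
  have hφ : ∀ k, φ (y k) ≤ q ^ k * φ (y 0) := by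
    intro k
    induction k with
    | zero => simp
    | succ k ih =>
      have h1 := hdecr k
      have h2 := herr k
      have hstep : φ (y (k + 1)) ≤ q * φ (y k) := by
        rw [hqdef, div_mul_eq_mul_div, le_div_iff₀ hsum]
        nlinarith [hnonneg (k + 1), hnonneg k]
      calc φ (y (k + 1)) ≤ q * φ (y k) := hstep
        _ ≤ q * (q ^ k * φ (y 0)) := by
            exact mul_le_mul_of_nonneg_left ih hq0
        _ = q ^ (k + 1) * φ (y 0) := by ring
  -- geometric bound on steps
  have hΔ : ∀ k, dist (y k) (y (k + 1)) ≤ C * r ^ k := by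
    intro k
    have hsq : ‖y k - y (k + 1)‖ ^ 2 ≤ (C * r ^ k) ^ 2 := by
      have h1 := hdecr k
      have h2 := hnonneg (k + 1)
      have h3 := hφ k
      have : ‖y k - y (k + 1)‖ ^ 2 ≤ q ^ k * φ (y 0) / C₁ := by
        rw [le_div_iff₀ hC₁]
        nlinarith
      calc ‖y k - y (k + 1)‖ ^ 2 ≤ q ^ k * φ (y 0) / C₁ := this
        _ = (C * r ^ k) ^ 2 := by
            rw [mul_pow, ← pow_mul, mul_comm k 2, pow_mul, hr2, hC2]; ring
    have := Real.sqrt_le_sqrt hsq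
    rw [Real.sqrt_sq (norm_nonneg _),
      Real.sqrt_sq (mul_nonneg hC0 (pow_nonneg hr0 k))] at this
    rw [dist_eq_norm]
    exact this
  have hcauchy : CauchySeq y := cauchySeq_of_le_geometric r C hr1 hΔ
  obtain ⟨ystar, hlim⟩ := cauchySeq_tendsto_of_complete hcauchy
  refine ⟨hr1, ystar, hlim, fun k => ?_⟩
  have hbound := dist_le_of_le_geometric_of_tendsto r C hr1 hΔ hlim k
  rw [dist_eq_norm] at hbound
  calc ‖y k - ystar‖ ≤ C * r ^ k / (1 - r) := hbound
    _ = C * (1 / (1 - r)) * r ^ k := by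
        field_simp
end

section
/- Let h : ℝᵐ → ℝ be differentiable with L-Lipschitz gradient and bounded below. Consider gradient descent x_{k+1} = x_k − β·g_k where g_k is an inexact gradient satisfying ‖g_k − ∇h(x_k)‖ ≤ ε for all k, with step size β ∈ (0, 1/(2L)). Then min_{0 ≤ k ≤ K} ‖∇h(x_k)‖² ≤ (h(x₀) − inf h)/(β(1/2 − βL)K) + ((β/2 + β²L)/(β(1/2 − βL)))·ε². -/
/-!
The descent lemma `h y ≤ h x + ⟪∇h x, y - x⟫ + L/2 ‖y - x‖²` applied to the step
`y = x - β g` gives, after splitting `g = ∇h x + e` and using `‖g‖² ≤ 2‖∇h x‖² + 2‖e‖²`,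
`h x_{k+1} ≤ h x_k - β(1/2 - βL)‖∇h x_k‖² + (β/2 + β²L)ε²`. Summing over `k < K` telescopes
to `h x₀ - inf h + K(β/2 + β²L)ε²`, and the smallest of the `K` terms is at most their mean.
-/

open scoped RealInnerProductSpace
open Finset

section Smooth

variable {F : Type*} [NormedAddCommGroup F] [InnerProductSpace ℝ F] [CompleteSpace F]

theorem hasDerivAt_comp_add_smul {h : F → ℝ} {grad : F → F}
    (hgrad : ∀ x, HasGradientAt h (grad x) x) (x d : F) (t : ℝ) :
    HasDerivAt (fun t : ℝ => h (x + t • d)) ⟪grad (x + t • d), d⟫ t := by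
  have hline : HasDerivAt (fun t : ℝ => x + t • d) d t := by
    simpa using ((hasDerivAt_id t).smul_const d).const_add x
  have := (hgrad (x + t • d)).hasFDerivAt.comp_hasDerivAt t hline
  simpa [Function.comp_def, real_inner_comm] using this

theorem le_add_inner_add_sq_of_lipschitz_gradient {h : F → ℝ} {grad : F → F} {L : ℝ}
    (hgrad : ∀ x, HasGradientAt h (grad x) x)
    (hLip : ∀ x₁ x₂, ‖grad x₁ - grad x₂‖ ≤ L * ‖x₁ - x₂‖) (x y : F) :
    h y ≤ h x + ⟪grad x, y - x⟫ + L / 2 * ‖y - x‖ ^ 2 := by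
  set d := y - x
  -- `φ' t = ⟪grad (x + t • d) - grad x, d⟫ - L t ‖d‖² ≤ 0` for `t ≥ 0`, so `φ 1 ≤ φ 0`.
  let φ : ℝ → ℝ := fun t => h (x + t • d) - t * ⟪grad x, d⟫ - L / 2 * t ^ 2 * ‖d‖ ^ 2
  have hφ : ∀ t, HasDerivAt φ (⟪grad (x + t • d), d⟫ - ⟪grad x, d⟫ - L * t * ‖d‖ ^ 2) t := by
    intro t
    refine (((hasDerivAt_comp_add_smul hgrad x d t).sub
      ((hasDerivAt_id t).mul_const ⟪grad x, d⟫)).sub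
      (((hasDerivAt_pow 2 t).const_mul (L / 2)).mul_const (‖d‖ ^ 2))).congr_deriv ?_
    push_cast; ring
  have hφ' : ∀ t ∈ interior (Set.Ici (0 : ℝ)),
      ⟪grad (x + t • d), d⟫ - ⟪grad x, d⟫ - L * t * ‖d‖ ^ 2 ≤ 0 := by
    intro t ht
    rw [interior_Ici, Set.mem_Ioi] at ht
    refine sub_nonpos.2 ?_
    calc ⟪grad (x + t • d), d⟫ - ⟪grad x, d⟫ = ⟪grad (x + t • d) - grad x, d⟫ :=
          (inner_sub_left _ _ _).symm
      _ ≤ ‖grad (x + t • d) - grad x‖ * ‖d‖ := real_inner_le_norm _ _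
      _ ≤ L * ‖x + t • d - x‖ * ‖d‖ := by gcongr; exact hLip _ _
      _ = L * t * ‖d‖ ^ 2 := by
          rw [add_sub_cancel_left, norm_smul, Real.norm_of_nonneg ht.le]; ring
  have hanti : AntitoneOn φ (Set.Ici 0) :=
    antitoneOn_of_hasDerivWithinAt_nonpos (convex_Ici 0)
      (fun t _ => (hφ t).continuousAt.continuousWithinAt)
      (fun t _ => (hφ t).hasDerivWithinAt) hφ'
  have := hanti Set.self_mem_Ici (by norm_num : (1 : ℝ) ∈ Set.Ici 0) zero_le_one
  simp only [φ, zero_smul, add_zero, one_smul, add_sub_cancel, d] at this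
  linarith

end Smooth

/-- The descent-lemma bound along an inexact step `-(β • g)`, where `a` is the exact gradient. -/
theorem inner_neg_smul_add_sq_le {E : Type*} [NormedAddCommGroup E] [InnerProductSpace ℝ E]
    (a g : E) {β L : ℝ} (hβ : 0 ≤ β) (hL : 0 ≤ L) :
    ⟪a, -(β • g)⟫ + L / 2 * ‖β • g‖ ^ 2 ≤
      -(β * (1 / 2 - β * L)) * ‖a‖ ^ 2 + (β / 2 + β ^ 2 * L) * ‖g - a‖ ^ 2 := by
  have hpolar : 2 * ⟪a, g⟫ = ‖a‖ ^ 2 + ‖g‖ ^ 2 - ‖g - a‖ ^ 2 := by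
    rw [norm_sub_sq_real, real_inner_comm]; ring
  have hsq : ‖g‖ ^ 2 ≤ 2 * ‖a‖ ^ 2 + 2 * ‖g - a‖ ^ 2 := by
    have := norm_add_sq_real a (g - a)
    rw [add_sub_cancel] at this
    nlinarith [norm_sub_sq_real a (g - a)]
  rw [inner_neg_right, inner_smul_right, norm_smul, mul_pow, Real.norm_of_nonneg hβ]
  nlinarith [mul_le_mul_of_nonneg_left hsq (mul_nonneg hL (sq_nonneg β)), sq_nonneg ‖g‖]

theorem exists_lt_le_of_le_sub_mul_add {u a : ℕ → ℝ} {c d m : ℝ} (hc : 0 < c)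
    (hm : ∀ k, m ≤ u k) (hstep : ∀ k, u (k + 1) ≤ u k - c * a k + d) {K : ℕ} (hK : 0 < K) :
    ∃ k < K, a k ≤ (u 0 - m) / (c * K) + d / c := by
  have hKpos : (0 : ℝ) < K := by exact_mod_cast hK
  have hsum : ∑ k ∈ range K, c * a k ≤ ∑ _k ∈ range K, ((u 0 - m) / K + d) :=
    calc ∑ k ∈ range K, c * a k ≤ ∑ k ∈ range K, (u k - u (k + 1) + d) :=
          sum_le_sum fun k _ => by linarith [hstep k]
      _ = u 0 - u K + K * d := by
          rw [sum_add_distrib, sum_range_sub', sum_const, card_range, nsmul_eq_mul]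
      _ ≤ ∑ _k ∈ range K, ((u 0 - m) / K + d) := by
          rw [sum_const, card_range, nsmul_eq_mul, mul_add, mul_div_cancel₀ _ hKpos.ne']
          linarith [hm K]
  obtain ⟨k, hk, hle⟩ := exists_le_of_sum_le (nonempty_range_iff.2 hK.ne') hsum
  refine ⟨k, mem_range.1 hk, ?_⟩
  rw [div_add_div _ _ (by positivity) hc.ne', le_div_iff₀ (by positivity)]
  rw [div_add' _ _ _ hKpos.ne', le_div_iff₀ hKpos] at hle
  nlinarith

theorem inexact_gradient_descent_rate_general {m : ℕ}
    (h : EuclideanSpace ℝ (Fin m) → ℝ)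
    (grad : EuclideanSpace ℝ (Fin m) → EuclideanSpace ℝ (Fin m))
    (hgrad : ∀ x, HasGradientAt h (grad x) x)
    (L : ℝ)
    (hLip : ∀ x₁ x₂, ‖grad x₁ - grad x₂‖ ≤ L * ‖x₁ - x₂‖)
    (hbdd : BddBelow (Set.range h))
    (x g : ℕ → EuclideanSpace ℝ (Fin m))
    (β ε : ℝ) (hβ0 : 0 < β) (hβ : β < 1 / (2 * L))
    (hupd : ∀ k, x (k + 1) = x k - β • g k)
    (hinexact : ∀ k, ‖g k - grad (x k)‖ ≤ ε) :
    ∀ K : ℕ, 0 < K → ∃ k ≤ K,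
      ‖grad (x k)‖ ^ 2 ≤ (h (x 0) - sInf (Set.range h)) / (β * (1 / 2 - β * L) * K) +
        (β / 2 + β ^ 2 * L) / (β * (1 / 2 - β * L)) * ε ^ 2 := by
  intro K hK
  have hL : 0 < L := by
    by_contra! hL
    exact (hβ0.trans hβ).not_ge (div_nonpos_of_nonneg_of_nonpos zero_le_one (by linarith))
  have hβL : β * L < 1 / 2 := by
    rw [lt_div_iff₀ (by positivity)] at hβ
    linarith
  have hstep : ∀ k, h (x (k + 1)) ≤
      h (x k) - β * (1 / 2 - β * L) * ‖grad (x k)‖ ^ 2 + (β / 2 + β ^ 2 * L) * ε ^ 2 := by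
    intro k
    have hdesc := le_add_inner_add_sq_of_lipschitz_gradient hgrad hLip (x k) (x (k + 1))
    rw [hupd k, sub_sub_cancel_left, norm_neg] at hdesc
    rw [hupd k]
    have herr : (β / 2 + β ^ 2 * L) * ‖g k - grad (x k)‖ ^ 2 ≤ (β / 2 + β ^ 2 * L) * ε ^ 2 :=
      mul_le_mul_of_nonneg_left (pow_le_pow_left₀ (norm_nonneg _) (hinexact k) 2) (by positivity)
    linarith [inner_neg_smul_add_sq_le (grad (x k)) (g k) hβ0.le hL.le]
  obtain ⟨k, hkK, hk⟩ := exists_lt_le_of_le_sub_mul_add (mul_pos hβ0 (by linarith))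
    (fun k => csInf_le hbdd ⟨x k, rfl⟩) hstep hK
  exact ⟨k, hkK.le, hk.trans_eq (by rw [mul_div_right_comm])⟩

/-- Inexact gradient descent on an L-smooth function bounded below:
min_{0 ≤ k ≤ K} ‖∇h(x_k)‖² ≤ (h(x₀) - inf h)/(β(1/2 - βL)K)
  + ((β/2 + β²L)/(β(1/2 - βL)))·ε². -/
theorem inexact_gradient_descent_rate {m : ℕ}
    (h : EuclideanSpace ℝ (Fin m) → ℝ)
    (grad : EuclideanSpace ℝ (Fin m) → EuclideanSpace ℝ (Fin m))
    (hgrad : ∀ x, HasGradientAt h (grad x) x)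
    (L : ℝ) (hL : 0 < L)
    (hLip : ∀ x₁ x₂, ‖grad x₁ - grad x₂‖ ≤ L * ‖x₁ - x₂‖)
    (hbdd : BddBelow (Set.range h))
    (x g : ℕ → EuclideanSpace ℝ (Fin m))
    (β ε : ℝ) (hβ0 : 0 < β) (hβ : β < 1 / (2 * L)) (hε : 0 ≤ ε)
    (hupd : ∀ k, x (k + 1) = x k - β • g k)
    (hinexact : ∀ k, ‖g k - grad (x k)‖ ≤ ε) :
    ∀ K : ℕ, 0 < K → ∃ k ≤ K,
      ‖grad (x k)‖ ^ 2 ≤ (h (x 0) - sInf (Set.range h)) / (β * (1 / 2 - β * L) * K) +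
        (β / 2 + β ^ 2 * L) / (β * (1 / 2 - β * L)) * ε ^ 2 :=
  inexact_gradient_descent_rate_general h grad hgrad L hLip hbdd x g β ε hβ0 hβ hupd hinexact
end

section
/- Let h : ℝᵐ → ℝ be differentiable with L-Lipschitz gradient. For any x, g ∈ ℝᵐ and β > 0, the inexact gradient step x⁺ = x − βg satisfies h(x⁺) ≤ h(x) − (β/2 − β²L)‖∇h(x)‖² + (β/2 + β²L)‖g − ∇h(x)‖². -/
/-!
Along the segment from `x` to `y`, the derivative of `t ↦ f (x + t • (y - x))` exceeds
`⟪∇f x, y - x⟫` by at most `L t ‖y - x‖²` (Cauchy–Schwarz and the Lipschitz bound), which gives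
`f y ≤ f x + ⟪∇f x, y - x⟫ + L/2 ‖y - x‖²`. For the step `y = x - β g`, write
`g = ∇h x + e`: the cross term `-β ⟪∇h x, e⟫` is bounded by Young's inequality and
`‖g‖² ≤ 2 (‖∇h x‖² + ‖e‖²)`.
-/

open InnerProductSpace Set

theorem norm_add_sq_le {E : Type*} [SeminormedAddGroup E] (a b : E) :
    ‖a + b‖ ^ 2 ≤ 2 * (‖a‖ ^ 2 + ‖b‖ ^ 2) :=
  (pow_le_pow_left₀ (norm_nonneg _) (norm_add_le a b) 2).trans add_sq_le

section

variable {F : Type*} [NormedAddCommGroup F] [InnerProductSpace ℝ F]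

theorem neg_real_inner_le_half_norm_sq_add_half_norm_sq (a b : F) :
    -⟪a, b⟫_ℝ ≤ ‖a‖ ^ 2 / 2 + ‖b‖ ^ 2 / 2 := by
  linarith [norm_add_sq_real a b, sq_nonneg ‖a + b‖]

variable [CompleteSpace F] {f : F → ℝ}

theorem HasGradientAt.hasDerivAt_add_smul {f' x v : F} {t : ℝ}
    (hf : HasGradientAt f f' (x + t • v)) :
    HasDerivAt (fun s : ℝ ↦ f (x + s • v)) ⟪f', v⟫_ℝ t := by
  have hline : HasDerivAt (fun s : ℝ ↦ x + s • v) v t := by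
    simpa using ((hasDerivAt_id t).smul_const v).const_add x
  exact hf.hasFDerivAt.comp_hasDerivAt t hline

theorem le_add_inner_add_half_mul_norm_sq_of_lipschitz_gradient {f' : F → F}
    (hf : ∀ z, HasGradientAt f (f' z) z) {x : F} {L : ℝ}
    (hLip : ∀ z, ‖f' z - f' x‖ ≤ L * ‖z - x‖) (y : F) :
    f y ≤ f x + ⟪f' x, y - x⟫_ℝ + L / 2 * ‖y - x‖ ^ 2 := by
  set v := y - x
  let φ : ℝ → ℝ := fun t ↦ f (x + t • v) - t * ⟪f' x, v⟫_ℝ - L / 2 * t ^ 2 * ‖v‖ ^ 2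
  have hφ : ∀ t, HasDerivAt φ (⟪f' (x + t • v) - f' x, v⟫_ℝ - L * t * ‖v‖ ^ 2) t := by
    intro t
    refine (((hf (x + t • v)).hasDerivAt_add_smul.sub
      ((hasDerivAt_id t).mul_const ⟪f' x, v⟫_ℝ)).sub
      (((hasDerivAt_pow 2 t).const_mul (L / 2)).mul_const (‖v‖ ^ 2))).congr_deriv ?_
    rw [inner_sub_left]
    ring
  have hφ_nonpos : ∀ t ∈ interior (Ici (0 : ℝ)),
      ⟪f' (x + t • v) - f' x, v⟫_ℝ - L * t * ‖v‖ ^ 2 ≤ 0 := by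
    rw [interior_Ici]
    intro t (ht : 0 < t)
    have hLip_t : ‖f' (x + t • v) - f' x‖ ≤ L * t * ‖v‖ := by
      simpa [norm_smul, abs_of_pos ht, mul_assoc] using hLip (x + t • v)
    refine sub_nonpos.mpr ?_
    calc ⟪f' (x + t • v) - f' x, v⟫_ℝ ≤ ‖f' (x + t • v) - f' x‖ * ‖v‖ := real_inner_le_norm _ _
      _ ≤ L * t * ‖v‖ * ‖v‖ := by gcongr
      _ = L * t * ‖v‖ ^ 2 := by ring
  have hanti : AntitoneOn φ (Ici 0) :=
    antitoneOn_of_hasDerivWithinAt_nonpos (convex_Ici 0)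
      (fun t _ ↦ (hφ t).continuousAt.continuousWithinAt)
      (fun t _ ↦ (hφ t).hasDerivWithinAt) hφ_nonpos
  have hφ_le : φ 1 ≤ φ 0 := hanti (mem_Ici.mpr le_rfl) (mem_Ici.mpr zero_le_one) zero_le_one
  simp only [φ, one_smul, zero_smul, add_zero, v, add_sub_cancel] at hφ_le
  linarith

end

/-- Descent lemma for an inexact gradient step. -/
theorem inexact_descent_lemma {m : ℕ}
    (h : EuclideanSpace ℝ (Fin m) → ℝ)
    (grad : EuclideanSpace ℝ (Fin m) → EuclideanSpace ℝ (Fin m))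
    (hgrad : ∀ x, HasGradientAt h (grad x) x)
    (L : ℝ) (hL : 0 < L)
    (hLip : ∀ x₁ x₂, ‖grad x₁ - grad x₂‖ ≤ L * ‖x₁ - x₂‖)
    (x g : EuclideanSpace ℝ (Fin m)) (β : ℝ) (hβ : 0 < β) :
    h (x - β • g) ≤ h x - (β / 2 - β ^ 2 * L) * ‖grad x‖ ^ 2 +
      (β / 2 + β ^ 2 * L) * ‖g - grad x‖ ^ 2 := by
  set e := g - grad x
  have hquad := le_add_inner_add_half_mul_norm_sq_of_lipschitz_gradient hgrad
    (fun z ↦ hLip z x) (x - β • g)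
  rw [sub_sub_cancel_left, inner_neg_right, real_inner_smul_right, norm_neg, norm_smul,
    Real.norm_of_nonneg hβ.le] at hquad
  have hsplit : ⟪grad x, g⟫_ℝ = ‖grad x‖ ^ 2 + ⟪grad x, e⟫_ℝ := by
    rw [← real_inner_self_eq_norm_sq, ← inner_add_right, add_sub_cancel]
  have hyoung := neg_real_inner_le_half_norm_sq_add_half_norm_sq (grad x) e
  have hsq : ‖g‖ ^ 2 ≤ 2 * (‖grad x‖ ^ 2 + ‖e‖ ^ 2) := by
    simpa [e] using norm_add_sq_le (grad x) e
  calc h (x - β • g)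
      ≤ h x - β * ‖grad x‖ ^ 2 + β * -⟪grad x, e⟫_ℝ + L / 2 * β ^ 2 * ‖g‖ ^ 2 := by
        rw [hsplit] at hquad; linarith
    _ ≤ h x - β * ‖grad x‖ ^ 2 + β * (‖grad x‖ ^ 2 / 2 + ‖e‖ ^ 2 / 2)
          + L / 2 * β ^ 2 * (2 * (‖grad x‖ ^ 2 + ‖e‖ ^ 2)) := by gcongr
    _ = h x - (β / 2 - β ^ 2 * L) * ‖grad x‖ ^ 2 + (β / 2 + β ^ 2 * L) * ‖e‖ ^ 2 := by ring
end

section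
/- Let Y ⊆ ℝⁿ be nonempty closed convex, F : ℝⁿ → ℝⁿ, and 0 < a < b. Then for every y, φ_{ab}(y) = φ_a(y) − φ_b(y) ≤ ((b − a)/2)‖y − z*_a(y)‖², where z*_a(y) is the unique maximizer over z ∈ Y of ⟪F(y), y − z⟫ − (a/2)‖y − z‖². -/
open RealInnerProductSpace

/-- Upper bound of the D-gap function: φ_a(y) - φ_b(y) ≤ ((b-a)/2)‖y - z*_a(y)‖². -/
theorem dgap_upper_bound {n : ℕ} (Y : Set (EuclideanSpace ℝ (Fin n)))
    (hY : Y.Nonempty) (hYc : IsClosed Y) (hYconv : Convex ℝ Y)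
    (F : EuclideanSpace ℝ (Fin n) → EuclideanSpace ℝ (Fin n))
    (a b : ℝ) (ha : 0 < a) (hab : a < b)
    (φ : ℝ → EuclideanSpace ℝ (Fin n) → ℝ)
    (hφ : ∀ c y, φ c y = sSup {v : ℝ | ∃ z ∈ Y, v = ⟪F y, y - z⟫ - c / 2 * ‖y - z‖ ^ 2})
    (za : EuclideanSpace ℝ (Fin n) → EuclideanSpace ℝ (Fin n))
    (hzaY : ∀ y, za y ∈ Y)
    (hzaMax : ∀ y, IsMaxOn (fun z => ⟪F y, y - z⟫ - a / 2 * ‖y - z‖ ^ 2) Y (za y))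
    (y : EuclideanSpace ℝ (Fin n)) :
    φ a y - φ b y ≤ (b - a) / 2 * ‖y - za y‖ ^ 2 := by
  set M : ℝ := ⟪F y, y - za y⟫ - a / 2 * ‖y - za y‖ ^ 2 with hM
  have hub : ∀ v ∈ {v : ℝ | ∃ z ∈ Y, v = ⟪F y, y - z⟫ - a / 2 * ‖y - z‖ ^ 2}, v ≤ M := by
    rintro v ⟨z, hz, rfl⟩
    exact hzaMax y hz
  have hφa : φ a y = M := by
    rw [hφ]
    apply le_antisymm
    · exact csSup_le ⟨M, za y, hzaY y, rfl⟩ hub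
    · exact le_csSup ⟨M, hub⟩ ⟨za y, hzaY y, rfl⟩
  have hubb : ∀ v ∈ {v : ℝ | ∃ z ∈ Y, v = ⟪F y, y - z⟫ - b / 2 * ‖y - z‖ ^ 2}, v ≤ M := by
    rintro v ⟨z, hz, rfl⟩
    have h1 : ⟪F y, y - z⟫ - a / 2 * ‖y - z‖ ^ 2 ≤ M := hzaMax y hz
    nlinarith [sq_nonneg ‖y - z‖]
  have hφb : ⟪F y, y - za y⟫ - b / 2 * ‖y - za y‖ ^ 2 ≤ φ b y := by
    rw [hφ]
    exact le_csSup ⟨M, hubb⟩ ⟨za y, hzaY y, rfl⟩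
  rw [hφa]
  nlinarith
end

section
/- Let Y ⊆ ℝⁿ be nonempty closed convex, F continuous, 0 < a < b. If y ∈ Y solves VI(Y, F) (i.e., ⟪F(y), z − y⟫ ≥ 0 for all z ∈ Y), then φ_{ab}(y) = 0. -/
open RealInnerProductSpace

/-- At a solution of VI(Y, F), the D-gap function vanishes. -/
theorem dgap_zero_at_VI_solution {n : ℕ} (Y : Set (EuclideanSpace ℝ (Fin n)))
    (hY : Y.Nonempty) (hYc : IsClosed Y) (hYconv : Convex ℝ Y)
    (F : EuclideanSpace ℝ (Fin n) → EuclideanSpace ℝ (Fin n)) (hF : Continuous F)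
    (a b : ℝ) (ha : 0 < a) (hab : a < b)
    (φ : ℝ → EuclideanSpace ℝ (Fin n) → ℝ)
    (hφ : ∀ c y, φ c y = sSup {v : ℝ | ∃ z ∈ Y, v = ⟪F y, y - z⟫ - c / 2 * ‖y - z‖ ^ 2})
    (y : EuclideanSpace ℝ (Fin n)) (hyY : y ∈ Y)
    (hVI : ∀ z ∈ Y, 0 ≤ ⟪F y, z - y⟫) :
    φ a y - φ b y = 0 := by
  have key : ∀ c : ℝ, 0 ≤ c → φ c y = 0 := by
    intro c hc
    rw [hφ]
    have hle : ∀ v ∈ {v : ℝ | ∃ z ∈ Y, v = ⟪F y, y - z⟫ - c / 2 * ‖y - z‖ ^ 2}, v ≤ 0 := by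
      rintro v ⟨z, hz, rfl⟩
      have h1 : ⟪F y, y - z⟫ ≤ 0 := by
        have := hVI z hz
        rw [show y - z = -(z - y) by abel, inner_neg_right]
        linarith
      have h2 : 0 ≤ c / 2 * ‖y - z‖ ^ 2 := by positivity
      linarith
    have hmem : (0 : ℝ) ∈ {v : ℝ | ∃ z ∈ Y, v = ⟪F y, y - z⟫ - c / 2 * ‖y - z‖ ^ 2} := by
      exact ⟨y, hyY, by simp⟩
    refine le_antisymm (Real.sSup_le hle ?_) (le_csSup ⟨0, hle⟩ hmem)
    exact le_refl 0
  rw [key a ha.le, key b (ha.trans hab).le, sub_zero]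
end

section
/- Let A : ℝⁿ → ℝᵐˣⁿ (Jacobian map) satisfy ‖A(y)‖ ≤ q < 1 for all y, and suppose G, G' ∈ ℝⁿˣᵐ satisfy the fixed-point identities G = A(ȳ)G + B(ȳ) and G' = A(y*)G' + B(y*) where B is L_B-Lipschitz and A is L_A-Lipschitz (in spectral/Frobenius norm) and ‖G'‖ ≤ C. Then ‖G − G'‖ ≤ (L_A·C + L_B)·‖ȳ − y*‖/(1 − q). -/
set_option maxHeartbeats 1000000 in
/-- Stability of implicit gradients defined by the differentiated fixed-point
equation G = A(y)·G + B(y): ‖G - G'‖ ≤ (L_A·C + L_B)·‖ȳ - y*‖/(1 - q). -/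
theorem implicit_gradient_fixed_point_stability {m n : ℕ}
    (A : EuclideanSpace ℝ (Fin n) →
      (EuclideanSpace ℝ (Fin n) →L[ℝ] EuclideanSpace ℝ (Fin n)))
    (B : EuclideanSpace ℝ (Fin n) →
      (EuclideanSpace ℝ (Fin m) →L[ℝ] EuclideanSpace ℝ (Fin n)))
    (G G' : EuclideanSpace ℝ (Fin m) →L[ℝ] EuclideanSpace ℝ (Fin n))
    (ybar ystar : EuclideanSpace ℝ (Fin n))
    (q LA LB C : ℝ) (hq1 : q < 1) (hLA : 0 ≤ LA) (hLB : 0 ≤ LB) (hC : 0 ≤ C)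
    (hA_bound : ∀ y, ‖A y‖ ≤ q)
    (hA_lip : ∀ y₁ y₂, ‖A y₁ - A y₂‖ ≤ LA * ‖y₁ - y₂‖)
    (hB_lip : ∀ y₁ y₂, ‖B y₁ - B y₂‖ ≤ LB * ‖y₁ - y₂‖)
    (hG : G = (A ybar).comp G + B ybar)
    (hG' : G' = (A ystar).comp G' + B ystar)
    (hG'_bound : ‖G'‖ ≤ C) :
    ‖G - G'‖ ≤ (LA * C + LB) * ‖ybar - ystar‖ / (1 - q) := by
  have hqpos : 0 < 1 - q := by linarith
  have key : G - G' = (A ybar).comp (G - G') + ((A ybar - A ystar).comp G' + (B ybar - B ystar)) := by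
    conv_lhs => rw [hG, hG']
    ext x
    simp [ContinuousLinearMap.comp_apply, ContinuousLinearMap.sub_apply,
      ContinuousLinearMap.add_apply, map_sub]
    abel
  have h1 : ‖(A ybar).comp (G - G')‖ ≤ q * ‖G - G'‖ :=
    le_trans ((A ybar).opNorm_comp_le _) (by
      have := hA_bound ybar
      exact mul_le_mul_of_nonneg_right this (norm_nonneg _))
  have h2 : ‖(A ybar - A ystar).comp G'‖ ≤ LA * ‖ybar - ystar‖ * C := by
    refine le_trans ((A ybar - A ystar).opNorm_comp_le _) ?_
    exact mul_le_mul (hA_lip _ _) hG'_bound (norm_nonneg _)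
      (by positivity)
  have h3 : ‖B ybar - B ystar‖ ≤ LB * ‖ybar - ystar‖ := hB_lip _ _
  have hmain : ‖G - G'‖ ≤ q * ‖G - G'‖ + (LA * ‖ybar - ystar‖ * C + LB * ‖ybar - ystar‖) := by
    calc ‖G - G'‖ = ‖(A ybar).comp (G - G') + ((A ybar - A ystar).comp G' + (B ybar - B ystar))‖ := by rw [← key]
    _ ≤ ‖(A ybar).comp (G - G')‖ + (‖(A ybar - A ystar).comp G'‖ + ‖B ybar - B ystar‖) :=
        le_trans (norm_add_le _ _) (by gcongr; exact norm_add_le _ _)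
    _ ≤ q * ‖G - G'‖ + (LA * ‖ybar - ystar‖ * C + LB * ‖ybar - ystar‖) := by gcongr
  rw [le_div_iff₀ hqpos]
  nlinarith [norm_nonneg (G - G')]
end
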